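/- Let E and F be wavelet sets, and let σ = σ_E^F : ℝ → ℝ be the 2-homogeneous extension (σ(2ⁿs) = 2ⁿσ(s), σ(0)=0) of the 2π-translation congruence from E to F. Then σ is a measure-preserving bijection of ℝ onto ℝ. -/

import Mathlib

/-!
Both `E` and `F` tile `ℝ ∖ {0}` by the dilations `s ↦ 2ⁿ s`, and homogeneity makes `σ` map
`2ⁿ E` bijectively onto `2ⁿ F`; with `σ 0 = 0` this makes `σ` a bijection of `ℝ`.
On `E`, `σ` is a translation by a multiple of `2π` on each of countably many measurable pieces,
so it carries Lebesgue measure on `E` to Lebesgue measure on `F`. Conjugating by `s ↦ 2ⁿ s`,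
which scales Lebesgue measure by a constant factor, transfers this to `2ⁿ E → 2ⁿ F`, and summing
over `n` shows that `σ` preserves Lebesgue measure.
-/

open MeasureTheory Set Real Function

namespace Set

variable {ι α β : Type*} {f : α → β}

theorem bijOn_iUnion_of_pairwise_disjoint {s : ι → Set α} {t : ι → Set β}
    (H : ∀ i, BijOn f (s i) (t i)) (ht : Pairwise (Disjoint on t)) :
    BijOn f (⋃ i, s i) (⋃ i, t i) := by
  refine bijOn_iUnion H ?_
  intro x hx y hy hxy
  obtain ⟨i, hxi⟩ := mem_iUnion.1 hx
  obtain ⟨j, hyj⟩ := mem_iUnion.1 hy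
  obtain rfl : i = j := by
    by_contra hij
    exact disjoint_left.1 (ht hij) ((H i).mapsTo hxi) (hxy ▸ (H j).mapsTo hyj)
  exact (H i).injOn hxi hyj hxy

theorem BijOn.bijective_of_compl_singleton {a : α} {b : β} (h : BijOn f {a}ᶜ {b}ᶜ)
    (hab : f a = b) : Bijective f := by
  have hinj : InjOn f ({a} ∪ {a}ᶜ) := by
    refine (injOn_union disjoint_compl_right).2 ⟨injOn_singleton f a, h.injOn, ?_⟩
    rintro x rfl y hy
    rw [hab]
    exact fun hb => h.mapsTo hy hb.symm
  have hunion := (bijOn_singleton.2 hab).union h hinj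
  rwa [union_compl_self, union_compl_self, bijOn_univ] at hunion

end Set

theorem MeasurableEquiv.map_restrict {α β : Type*} [MeasurableSpace α] [MeasurableSpace β]
    (e : α ≃ᵐ β) (μ : Measure α) (S : Set α) :
    (μ.restrict S).map e = (μ.map e).restrict (e '' S) := by
  rw [e.restrict_map, e.preimage_image]

section Translation

variable {G : Type*} [MeasurableSpace G] [AddGroup G] [MeasurableAdd G] {μ : Measure G}
  [μ.IsAddRightInvariant]

theorem MeasureTheory.Measure.map_add_right_restrict (t : G) (S : Set G) :
    (μ.restrict S).map (· + t) = μ.restrict ((· + t) '' S) := by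
  rw [← MeasurableEquiv.coe_addRight t, MeasurableEquiv.map_restrict, MeasurableEquiv.coe_addRight,
    map_add_right_eq_self]

theorem MeasureTheory.Measure.map_restrict_eq_restrict_of_bijOn_of_countable_translations
    [MeasurableEq G] {E F T : Set G} {σ : G → G}
    (hE : MeasurableSet E) (hσ : Measurable σ) (hbij : BijOn σ E F) (hT : T.Countable)
    (htrans : ∀ s ∈ E, ∃ t ∈ T, σ s = s + t) :
    (μ.restrict E).map σ = μ.restrict F := by
  have := hT.to_subtype
  let piece : T → Set G := fun t => E ∩ {s | σ s = s + t}
  have hpiece_meas : ∀ t, MeasurableSet (piece t) := fun t =>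
    hE.inter (measurableSet_eq_fun hσ (measurable_add_const _))
  have hpiece_disj : Pairwise (Disjoint on piece) := by
    intro t t' htt'
    refine disjoint_left.2 fun s hs hs' => htt' (Subtype.ext ?_)
    exact add_left_cancel (hs.2.symm.trans hs'.2)
  have hE_eq : E = ⋃ t, piece t := by
    ext s
    refine ⟨fun hs => ?_, fun hs => (mem_iUnion.1 hs).elim fun _ h => h.1⟩
    obtain ⟨t, ht, hst⟩ := htrans s hs
    exact mem_iUnion.2 ⟨⟨t, ht⟩, hs, hst⟩
  have himage : ∀ t : T, σ '' piece t = (· + (t : G)) '' piece t := fun t =>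
    image_congr fun s hs => hs.2
  have hF_eq : F = ⋃ t, σ '' piece t := by rw [← hbij.image_eq, hE_eq, image_iUnion]
  rw [hF_eq, hE_eq, Measure.restrict_iUnion hpiece_disj hpiece_meas,
    Measure.map_sum hσ.aemeasurable, Measure.restrict_iUnion]
  · congr 1
    funext t
    rw [himage, ← Measure.map_add_right_restrict]
    exact Measure.map_congr (ae_restrict_of_forall_mem (hpiece_meas t) fun s hs => hs.2)
  · intro t t' htt'
    have hsub : ∀ t, piece t ⊆ E := fun t => inter_subset_left
    rw [onFun, disjoint_iff_inter_eq_empty, ← hbij.injOn.image_inter (hsub t) (hsub t'),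
      (hpiece_disj htt').inter_eq, image_empty]
  · intro t
    rw [himage]
    exact (MeasurableEquiv.addRight (t : G)).measurableSet_image.2 (hpiece_meas t)

end Translation

theorem Real.restrict_image_mul_left {c : ℝ} (hc : c ≠ 0) (S : Set ℝ) :
    volume.restrict ((c * ·) '' S) = ENNReal.ofReal |c| • (volume.restrict S).map (c * ·) := by
  rw [← MeasurableEquiv.coe_mulLeft₀ hc, MeasurableEquiv.map_restrict, MeasurableEquiv.coe_mulLeft₀,
    ← Measure.restrict_smul, Real.smul_map_volume_mul_left hc]

theorem Real.map_restrict_image_mul_left {σ : ℝ → ℝ} (hσ : Measurable σ) {c : ℝ} (hc : c ≠ 0)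
    (hcomm : Semiconj (c * ·) σ σ) {E F : Set ℝ}
    (h : (volume.restrict E).map σ = volume.restrict F) :
    (volume.restrict ((c * ·) '' E)).map σ = volume.restrict ((c * ·) '' F) := by
  rw [Real.restrict_image_mul_left hc, Real.restrict_image_mul_left hc, Measure.map_smul,
    Measure.map_map hσ (measurable_const_mul c), ← h, Measure.map_map (measurable_const_mul c) hσ,
    hcomm.comp_eq]

theorem Real.volume_eq_sum_restrict_image_mul_zpow {a : ℝ} (ha : a ≠ 0) {E : Set ℝ}
    (hE : MeasurableSet E) (hdisj : Pairwise (Disjoint on fun n : ℤ => (a ^ n * ·) '' E))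
    (hcover : ⋃ n : ℤ, (a ^ n * ·) '' E = {0}ᶜ) :
    volume = Measure.sum fun n : ℤ => volume.restrict ((a ^ n * ·) '' E) := by
  rw [← Measure.restrict_iUnion hdisj, hcover, restrict_compl_singleton]
  exact fun n => (MeasurableEquiv.mulLeft₀ _ (zpow_ne_zero n ha)).measurableSet_image.2 hE

theorem stmt_17 (E F : Set ℝ) (hE : MeasurableSet E) (hF : MeasurableSet F)
    (hEdisj : ∀ m n : ℤ, m ≠ n →
        Disjoint ((fun s => (2 : ℝ) ^ m * s) '' E) ((fun s => (2 : ℝ) ^ n * s) '' E))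
    (hEuniv : (⋃ n : ℤ, (fun s => (2 : ℝ) ^ n * s) '' E) = {(0 : ℝ)}ᶜ)
    (hFdisj : ∀ m n : ℤ, m ≠ n →
        Disjoint ((fun s => (2 : ℝ) ^ m * s) '' F) ((fun s => (2 : ℝ) ^ n * s) '' F))
    (hFuniv : (⋃ n : ℤ, (fun s => (2 : ℝ) ^ n * s) '' F) = {(0 : ℝ)}ᶜ)
    (σ : ℝ → ℝ) (hσmeas : Measurable σ) (hσ0 : σ 0 = 0)
    (hhom : ∀ (n : ℤ) (s : ℝ), σ ((2 : ℝ) ^ n * s) = (2 : ℝ) ^ n * σ s)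
    (hbij : Set.BijOn σ E F)
    (htc : ∀ s ∈ E, ∃ k : ℤ, σ s = s + 2 * π * k) :
    Function.Bijective σ ∧ MeasurePreserving σ volume volume := by
  have h2n : ∀ n : ℤ, (2 : ℝ) ^ n ≠ 0 := fun n => zpow_ne_zero n two_ne_zero
  have hcomm : ∀ n : ℤ, Semiconj ((2 : ℝ) ^ n * ·) σ σ := fun n s => (hhom n s).symm
  refine ⟨?_, hσmeas, ?_⟩
  · refine BijOn.bijective_of_compl_singleton ?_ hσ0
    have hdilates := bijOn_iUnion_of_pairwise_disjoint
      (fun n => (hcomm n).bijOn_image hbij (mul_right_injective₀ (h2n n)).injOn) hFdisj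
    rwa [hEuniv, hFuniv] at hdilates
  · have hmap : (volume.restrict E).map σ = volume.restrict F :=
      Measure.map_restrict_eq_restrict_of_bijOn_of_countable_translations hE hσmeas hbij
        (countable_range fun k : ℤ => 2 * π * k)
        fun s hs => (htc s hs).elim fun k hk => ⟨_, mem_range_self k, hk⟩
    calc volume.map σ
        = (Measure.sum fun n : ℤ => volume.restrict (((2 : ℝ) ^ n * ·) '' E)).map σ := by
          rw [← Real.volume_eq_sum_restrict_image_mul_zpow two_ne_zero hE hEdisj hEuniv]
      _ = Measure.sum fun n : ℤ => volume.restrict (((2 : ℝ) ^ n * ·) '' F) := by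
          rw [Measure.map_sum hσmeas.aemeasurable]
          exact congrArg _ <| funext fun n =>
            Real.map_restrict_image_mul_left hσmeas (h2n n) (hcomm n) hmap
      _ = volume := (Real.volume_eq_sum_restrict_image_mul_zpow two_ne_zero hF hFdisj hFuniv).symm
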